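/- arXiv:1604.01928 — 2 statements merged into one kernel-verified Lean document; each statement's English description precedes it below -/
import Mathlib

section
/- (Proposition 2 with delay operators, exponential convergence under persistent excitation.) Let q ≥ 1, let r ∈ ℝ^q, let m : ℝ → ℝ^q be bounded and continuous, and let ρ : ℝ → ℝ satisfy ρ(t) = m(t)ᵀ r for all t ∈ ℝ. Let d_1,…,d_{q−1} > 0 be pairwise distinct delays, and define M_e(t) ∈ ℝ^{q×q} with first row m(t)ᵀ and (j+1)-th row m(t−d_j)ᵀ, R_e(t) = (ρ(t), ρ(t−d_1),…,ρ(t−d_{q−1}))ᵀ, ψ(t) = det M_e(t), and R(t) = adj(M_e(t)) R_e(t). Let k_1,…,k_q > 0 and let r̂ : ℝ → ℝ^q be differentiable on [0,∞) with r̂_i'(t) = k_i ψ(t) (R_i(t) − ψ(t) r̂_i(t)) for all t ≥ 0, i = 1,…,q. If ψ is persistently exciting, i.e. there exist T, δ > 0 with ∫_t^{t+T} ψ(s)² ds ≥ δ for all t ≥ 0, then each r̂_i converges to r_i exponentially fast: there exist C ≥ 0 and λ > 0 such that |r̂_i(t) − r_i| ≤ C e^{−λ t} for all t ≥ 0 and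 all i. -/
/-!
Since `adj(M_e) M_e = det M_e • 1`, the mixed regressor is `R = ψ • r`, so each error
`x_i = r̂_i - r_i` solves the scalar linear equation `x_i' = -k_i ψ² x_i`. An integrating factor
gives `x_i(t) = x_i(0) exp(-k_i ∫₀ᵗ ψ²)`, and persistent excitation, summed over `⌊t / T⌋` windows,
gives `∫₀ᵗ ψ² ≥ δ (t / T - 1)`: every component decays at the rate `(min_i k_i) δ / T`.
-/

open Real intervalIntegral MeasureTheory
open scoped Matrix

theorem Matrix.adjugate_mulVec_mulVec {n R : Type*} [Fintype n] [DecidableEq n] [CommRing R]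
    (M : Matrix n n R) (v : n → R) : M.adjugate *ᵥ (M *ᵥ v) = M.det • v := by
  rw [mulVec_mulVec, adjugate_mul, smul_mulVec, one_mulVec]

theorem eq_mul_exp_neg_integral_of_hasDerivAt {x g : ℝ → ℝ} (hg : Continuous g)
    (hx : ∀ t ≥ 0, HasDerivAt x (-g t * x t) t) {t : ℝ} (ht : 0 ≤ t) :
    x t = x 0 * exp (-∫ s in 0..t, g s) := by
  set G : ℝ → ℝ := fun t => ∫ s in 0..t, g s
  have hG : ∀ s, HasDerivAt G (g s) s := fun s =>
    integral_hasDerivAt_right (hg.intervalIntegrable 0 s) (hg.stronglyMeasurableAtFilter _ _)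
      hg.continuousAt
  have hconst : ∀ s ≥ 0, HasDerivAt (fun u => x u * exp (G u)) 0 s := fun s hs =>
    ((hx s hs).mul (hG s).exp).congr_deriv (by ring)
  have h := constant_of_has_deriv_right_zero
    (fun s hs => (hconst s hs.1).continuousAt.continuousWithinAt)
    (fun s hs => (hconst s hs.1).hasDerivWithinAt) t ⟨ht, le_rfl⟩
  simp only [G, integral_same, exp_zero, mul_one] at h
  rw [exp_neg, ← h, mul_inv_cancel_right₀ (exp_pos _).ne']

theorem mul_sub_one_le_integral_of_persistentExcitation {g : ℝ → ℝ}
    (hg : ∀ a b, IntervalIntegrable g volume a b) (hg_nonneg : ∀ s, 0 ≤ g s)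
    {T δ : ℝ} (hT : 0 < T) (hδ : 0 ≤ δ) (hPE : ∀ t ≥ 0, δ ≤ ∫ s in t..t + T, g s)
    {t : ℝ} (ht : 0 ≤ t) : δ * (t / T - 1) ≤ ∫ s in 0..t, g s := by
  have hperiods : ∀ n : ℕ, n * δ ≤ ∫ s in 0..n * T, g s := by
    intro n
    induction n with
    | zero => simp
    | succ n ih =>
      rw [Nat.cast_succ, add_one_mul, add_one_mul,
        ← integral_add_adjacent_intervals (hg 0 (n * T)) (hg _ _)]
      linarith [hPE (n * T) (by positivity)]
  set n := ⌊t / T⌋₊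
  have hnT : n * T ≤ t := (le_div_iff₀ hT).1 (Nat.floor_le (by positivity))
  calc δ * (t / T - 1) ≤ n * δ := by
        nlinarith [(Nat.sub_one_lt_floor (t / T)).le]
    _ ≤ ∫ s in 0..n * T, g s := hperiods n
    _ ≤ ∫ s in 0..t, g s :=
        integral_mono_interval le_rfl (by positivity) hnT
          (Filter.Eventually.of_forall hg_nonneg) (hg 0 t)

theorem abs_le_mul_exp_of_hasDerivAt_of_persistentExcitation {x g : ℝ → ℝ}
    (hg : Continuous g) (hg_nonneg : ∀ s, 0 ≤ g s)
    (hx : ∀ t ≥ 0, HasDerivAt x (-g t * x t) t)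
    {T δ : ℝ} (hT : 0 < T) (hδ : 0 ≤ δ) (hPE : ∀ t ≥ 0, δ ≤ ∫ s in t..t + T, g s)
    {t : ℝ} (ht : 0 ≤ t) : |x t| ≤ |x 0| * exp δ * exp (-(δ / T) * t) := by
  have hlow := mul_sub_one_le_integral_of_persistentExcitation hg.intervalIntegrable hg_nonneg
    hT hδ hPE ht
  calc |x t| = |x 0| * exp (-∫ s in 0..t, g s) := by
        rw [eq_mul_exp_neg_integral_of_hasDerivAt hg hx ht, abs_mul, abs_exp]
    _ ≤ |x 0| * exp (-(δ * (t / T - 1))) := by gcongr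
    _ = |x 0| * exp δ * exp (-(δ / T) * t) := by
        rw [mul_assoc, ← exp_add]; congr 2; field_simp; ring

theorem Finite.exists_pos_forall_le {ι α : Type*} [Finite ι] [LinearOrder α] [Zero α]
    [NoMaxOrder α] {k : ι → α} (hk : ∀ i, 0 < k i) : ∃ ε > 0, ∀ i, ε ≤ k i := by
  rcases isEmpty_or_nonempty ι with _ | _
  · obtain ⟨ε, hε⟩ := exists_gt (0 : α)
    exact ⟨ε, hε, isEmptyElim⟩
  · obtain ⟨i₀, hi₀⟩ := Finite.exists_min k
    exact ⟨k i₀, hk i₀, hi₀⟩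

/-- Proposition 2 with delay operators, exponential convergence:
DREM with `q-1` pairwise-distinct delays; if `ψ = det M_e` is persistently
exciting then every component of the estimator converges exponentially fast. -/
theorem statement9 (q : ℕ) (r : Fin q → ℝ)
    (m : ℝ → Fin q → ℝ) (hm_cont : Continuous m)
    (ρ : ℝ → ℝ) (hρ : ∀ t, ρ t = ∑ i, m t i * r i)
    (d : Fin (q - 1) → ℝ)
    (Me : ℝ → Matrix (Fin q) (Fin q) ℝ)
    (hMe : ∀ t (i j : Fin q), Me t i j =
      if h : (i : ℕ) = 0 then m t j else m (t - d ⟨(i : ℕ) - 1, by omega⟩) j)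
    (Re : ℝ → Fin q → ℝ)
    (hRe : ∀ t (i : Fin q), Re t i =
      if h : (i : ℕ) = 0 then ρ t else ρ (t - d ⟨(i : ℕ) - 1, by omega⟩))
    (ψ : ℝ → ℝ) (hψ : ∀ t, ψ t = (Me t).det)
    (R : ℝ → Fin q → ℝ) (hR : ∀ t, R t = (Me t).adjugate.mulVec (Re t))
    (k : Fin q → ℝ) (hk : ∀ i, k i > 0)
    (rhat : ℝ → Fin q → ℝ)
    (hrhat : ∀ t ≥ (0 : ℝ), ∀ i : Fin q,
      HasDerivAt (fun s => rhat s i) (k i * ψ t * (R t i - ψ t * rhat t i)) t)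
    (T δ : ℝ) (hT : T > 0) (hδ : δ > 0)
    (hPE : ∀ t ≥ (0 : ℝ), δ ≤ ∫ s in t..(t + T), (ψ s) ^ 2) :
    ∃ C ≥ (0 : ℝ), ∃ lam > (0 : ℝ), ∀ t ≥ (0 : ℝ), ∀ i : Fin q,
      |rhat t i - r i| ≤ C * Real.exp (-lam * t) := by
  have hψ_cont : Continuous ψ := by
    have hMe_cont : Continuous Me := continuous_matrix fun i j => by
      simp only [hMe]
      split_ifs <;> fun_prop
    simpa only [← hψ] using hMe_cont.matrix_det
  have hR_eq : ∀ t, R t = ψ t • r := fun t => by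
    have hRe_eq : Re t = Me t *ᵥ r := by
      funext i
      simp only [hRe, hρ, Matrix.mulVec, dotProduct, hMe]
      split_ifs <;> rfl
    rw [hR, hRe_eq, Matrix.adjugate_mulVec_mulVec, hψ]
  obtain ⟨ε, hε, hεk⟩ := Finite.exists_pos_forall_le hk
  refine ⟨(∑ i, |rhat 0 i - r i|) * exp (ε * δ), by positivity, ε * δ / T, by positivity,
    fun t ht i => ?_⟩
  have herr : ∀ s ≥ 0, HasDerivAt (fun u => rhat u i - r i)
      (-(k i * ψ s ^ 2) * (rhat s i - r i)) s := fun s hs =>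
    ((hrhat s hs i).sub_const (r i)).congr_deriv <| by
      rw [hR_eq, Pi.smul_apply, smul_eq_mul]; ring
  have hPE_i : ∀ s ≥ 0, ε * δ ≤ ∫ u in s..s + T, k i * ψ u ^ 2 := fun s hs => by
    rw [intervalIntegral.integral_const_mul]
    exact mul_le_mul (hεk i) (hPE s hs) hδ.le (hk i).le
  calc |rhat t i - r i|
      ≤ |rhat 0 i - r i| * exp (ε * δ) * exp (-(ε * δ / T) * t) :=
        abs_le_mul_exp_of_hasDerivAt_of_persistentExcitation (by fun_prop)
          (fun s => mul_nonneg (hk i).le (sq_nonneg _)) herr hT (by positivity) hPE_i ht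
    _ ≤ (∑ i, |rhat 0 i - r i|) * exp (ε * δ) * exp (-(ε * δ / T) * t) := by
        gcongr
        exact Finset.single_le_sum (fun j _ => abs_nonneg (rhat 0 j - r j)) (Finset.mem_univ i)
end

section
/- (Proposition 4.) Let B_1, B_2 > 0, let ω_1, ω_2 > 0 with ω_1 ≠ ω_2, let φ̄_1, φ̄_2 ∈ ℝ, and let d satisfy 0 < d < π / max(ω_1, ω_2). Define s_i(t) = B_i sin(ω_i t + φ̄_i), ξ_1(t) = s_1(t) + s_2(t), ξ_3(t) = −(ω_1² s_1(t) + ω_2² s_2(t)), and Φ_e(t) the 2×2 matrix with rows (ξ_3(t), ξ_1(t)) and (ξ_3(t−d), ξ_1(t−d)). Then det Φ_e is not square integrable on [0,∞): ∫_0^t (det Φ_e(s))² ds → ∞ as t → ∞. -/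
/-!
Eliminating `ξ₃` gives `det Φe t = (ω₂² - ω₁²) (s₁ t s₂ (t - d) - s₂ t s₁ (t - d))`, and the
product-to-sum formulas at the midpoint `t - d/2` turn this into
`P sin ((ω₁ - ω₂) t + θ₁) + Q sin ((ω₁ + ω₂) t + θ₂)` with
`Q = (ω₂² - ω₁²) B₁ B₂ sin ((ω₁ - ω₂) d / 2)`, which is nonzero because `|ω₁ - ω₂| d / 2 < π`.
The square of such a sum is the positive constant `(P² + Q²) / 2` plus cosines of nonzero
frequencies, whose integrals stay bounded, so `∫₀ᵗ (det Φe)²` grows linearly in `t`.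
-/

open Real Filter intervalIntegral

lemma abs_integral_cos_mul_add_le {γ : ℝ} (hγ : γ ≠ 0) (δ a b : ℝ) :
    |∫ x in a..b, cos (γ * x + δ)| ≤ 2 / |γ| := by
  rw [integral_comp_mul_add (fun x => cos x) hγ, integral_cos, smul_eq_mul, abs_mul, abs_inv,
    div_eq_inv_mul]
  gcongr
  exact (abs_sub _ _).trans (by linarith [abs_sin_le_one (γ * b + δ), abs_sin_le_one (γ * a + δ)])

lemma tendsto_integral_const_add_sum_cos_atTop {ι : Type*} (s : Finset ι) {c : ℝ} (hc : 0 < c)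
    (k γ δ : ι → ℝ) (hγ : ∀ i ∈ s, γ i ≠ 0) :
    Tendsto (fun t => ∫ x in (0 : ℝ)..t, c + ∑ i ∈ s, k i * cos (γ i * x + δ i))
      atTop atTop := by
  have hint (t : ℝ) : ∫ x in (0 : ℝ)..t, c + ∑ i ∈ s, k i * cos (γ i * x + δ i)
      = c * t + ∑ i ∈ s, k i * ∫ x in (0 : ℝ)..t, cos (γ i * x + δ i) := by
    rw [integral_add intervalIntegrable_const, integral_finsetSum, integral_const]
    · simp only [sub_zero, smul_eq_mul, mul_comm t, integral_const_mul]
    · intro i _; exact (by fun_prop : Continuous _).intervalIntegrable _ _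
    · exact (by fun_prop : Continuous _).intervalIntegrable _ _
  have hbound (t : ℝ) : -∑ i ∈ s, |k i| * (2 / |γ i|)
      ≤ ∑ i ∈ s, k i * ∫ x in (0 : ℝ)..t, cos (γ i * x + δ i) := by
    rw [← Finset.sum_neg_distrib]
    refine Finset.sum_le_sum fun i hi => ?_
    calc -(|k i| * (2 / |γ i|))
        ≤ -(|k i| * |∫ x in (0 : ℝ)..t, cos (γ i * x + δ i)|) := by
          gcongr; exact abs_integral_cos_mul_add_le (hγ i hi) (δ i) 0 t
      _ = -|k i * ∫ x in (0 : ℝ)..t, cos (γ i * x + δ i)| := by rw [abs_mul]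
      _ ≤ _ := neg_abs_le _
  simp only [hint]
  exact tendsto_atTop_add_right_of_le _ _ (tendsto_id.const_mul_atTop hc) hbound

lemma sin_add_mul_sin_sub_sub_sin_add_mul_sin_sub (a b p q : ℝ) :
    sin (a + p) * sin (b - q) - sin (b + q) * sin (a - p)
      = sin (p - q) * sin (a + b) - sin (p + q) * sin (a - b) := by
  simp only [sin_add, sin_sub]; ring

lemma sq_mul_sin_add_mul_sin (P Q x y : ℝ) :
    (P * sin x + Q * sin y) ^ 2 = (P ^ 2 + Q ^ 2) / 2 - P ^ 2 / 2 * cos (2 * x)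
      - Q ^ 2 / 2 * cos (2 * y) + P * Q * cos (x - y) - P * Q * cos (x + y) := by
  simp only [cos_two_mul, cos_sub, cos_add]
  linear_combination P ^ 2 * sin_sq_add_cos_sq x + Q ^ 2 * sin_sq_add_cos_sq y

lemma tendsto_integral_sq_mul_sin_add_mul_sin_atTop {P Q α β θ₁ θ₂ : ℝ} (hPQ : P ≠ 0 ∨ Q ≠ 0)
    (hα : α ≠ 0) (hβ : β ≠ 0) (hαβ : α - β ≠ 0) (hαβ' : α + β ≠ 0) :
    Tendsto (fun t => ∫ s in (0 : ℝ)..t, (P * sin (α * s + θ₁) + Q * sin (β * s + θ₂)) ^ 2)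
      atTop atTop := by
  have hc : 0 < (P ^ 2 + Q ^ 2) / 2 := by rcases hPQ with h | h <;> positivity
  have := tendsto_integral_const_add_sum_cos_atTop Finset.univ hc
    ![-(P ^ 2 / 2), -(Q ^ 2 / 2), P * Q, -(P * Q)] ![2 * α, 2 * β, α - β, α + β]
    ![2 * θ₁, 2 * θ₂, θ₁ - θ₂, θ₁ + θ₂] (by simp [Fin.forall_fin_succ, *])
  refine this.congr fun t => integral_congr fun s _ => ?_
  simp only [Fin.sum_univ_four, Fin.isValue, Matrix.cons_val_zero, Matrix.cons_val_one,
    Matrix.cons_val, neg_mul]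
  rw [sq_mul_sin_add_mul_sin]
  ring_nf

lemma sin_sub_ne_zero_of_lt_pi_div_max {ω₁ ω₂ d : ℝ} (hω₁ : 0 < ω₁) (hω₂ : 0 < ω₂) (hω : ω₁ ≠ ω₂)
    (hd : 0 < d) (hd' : d < π / max ω₁ ω₂) : sin (ω₁ * d / 2 - ω₂ * d / 2) ≠ 0 := by
  have hmax : max ω₁ ω₂ * d < π := (lt_div_iff₀' (lt_max_of_lt_left hω₁)).mp hd'
  have h₁ : ω₁ * d ≤ max ω₁ ω₂ * d := by gcongr; exact le_max_left _ _
  have h₂ : ω₂ * d ≤ max ω₁ ω₂ * d := by gcongr; exact le_max_right _ _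
  have h₀₁ : 0 < ω₁ * d := by positivity
  have h₀₂ : 0 < ω₂ * d := by positivity
  rw [Ne, sin_eq_zero_iff_of_lt_of_lt (by linarith) (by linarith)]
  intro h
  exact hω (mul_right_cancel₀ hd.ne' (by linarith))

/-- Proposition 4: if `0 < d < π / max(ω₁, ω₂)` then the
determinant of the extended regressor for `N = 2` is not square integrable:
`∫_0^t (det Φ_e)² ds → ∞`. -/
theorem statement15 (B₁ B₂ ω₁ ω₂ phb₁ phb₂ d : ℝ)
    (hB₁ : B₁ > 0) (hB₂ : B₂ > 0) (hω₁ : ω₁ > 0) (hω₂ : ω₂ > 0)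
    (hω : ω₁ ≠ ω₂) (hd : 0 < d) (hd' : d < Real.pi / max ω₁ ω₂)
    (s₁ s₂ : ℝ → ℝ)
    (hs₁ : ∀ t, s₁ t = B₁ * Real.sin (ω₁ * t + phb₁))
    (hs₂ : ∀ t, s₂ t = B₂ * Real.sin (ω₂ * t + phb₂))
    (ξ₁ ξ₃ : ℝ → ℝ)
    (hξ₁ : ∀ t, ξ₁ t = s₁ t + s₂ t)
    (hξ₃ : ∀ t, ξ₃ t = -(ω₁ ^ 2 * s₁ t + ω₂ ^ 2 * s₂ t))
    (Φe : ℝ → Matrix (Fin 2) (Fin 2) ℝ)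
    (hΦe : ∀ t, Φe t = !![ξ₃ t, ξ₁ t; ξ₃ (t - d), ξ₁ (t - d)]) :
    Filter.Tendsto (fun t => ∫ s in (0 : ℝ)..t, ((Φe s).det) ^ 2)
      Filter.atTop Filter.atTop := by
  set p := ω₁ * d / 2
  set q := ω₂ * d / 2
  set K := (ω₂ ^ 2 - ω₁ ^ 2) * B₁ * B₂
  have hdet (s : ℝ) : (Φe s).det
      = -(K * sin (p + q)) * sin ((ω₁ - ω₂) * s + (phb₁ - phb₂ - (p - q)))
        + K * sin (p - q) * sin ((ω₁ + ω₂) * s + (phb₁ + phb₂ - (p + q))) := by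
    have h := sin_add_mul_sin_sub_sub_sin_add_mul_sin_sub
      (ω₁ * (s - d / 2) + phb₁) (ω₂ * (s - d / 2) + phb₂) p q
    rw [show ω₁ * (s - d / 2) + phb₁ + p = ω₁ * s + phb₁ by ring,
      show ω₂ * (s - d / 2) + phb₂ + q = ω₂ * s + phb₂ by ring,
      show ω₁ * (s - d / 2) + phb₁ - p = ω₁ * (s - d) + phb₁ by ring,
      show ω₂ * (s - d / 2) + phb₂ - q = ω₂ * (s - d) + phb₂ by ring,
      show ω₁ * (s - d / 2) + phb₁ + (ω₂ * (s - d / 2) + phb₂)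
        = (ω₁ + ω₂) * s + (phb₁ + phb₂ - (p + q)) by ring,
      show ω₁ * (s - d / 2) + phb₁ - (ω₂ * (s - d / 2) + phb₂)
        = (ω₁ - ω₂) * s + (phb₁ - phb₂ - (p - q)) by ring] at h
    simp only [hΦe, Matrix.det_fin_two_of, hξ₁, hξ₃, hs₁, hs₂]
    linear_combination K * h
  have hK : K ≠ 0 := by
    have : ω₂ ^ 2 - ω₁ ^ 2 ≠ 0 := by
      rw [sq_sub_sq]; exact mul_ne_zero (by positivity) (sub_ne_zero.mpr hω.symm)
    exact mul_ne_zero (mul_ne_zero this hB₁.ne') hB₂.ne'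
  simpa only [hdet] using tendsto_integral_sq_mul_sin_add_mul_sin_atTop
    (Or.inr (mul_ne_zero hK (sin_sub_ne_zero_of_lt_pi_div_max hω₁ hω₂ hω hd hd')))
    (sub_ne_zero.mpr hω) (by positivity) (by intro h; linarith) (by intro h; linarith)
end
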